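/- If two bounded Borda-count perturbations satisfy |BC'(τ) − BC(τ)| ≤ ε for all τ in a finite set T (which holds whenever BC' = (1−ε)·BC + ε·B̃C with BC, B̃C taking values in [0,1]), then the KL divergence between the Gibbs distributions with temperature α > 0 induced by BC and BC' is at most ε²/(2α²). -/

import Mathlib

/-!
Write `p = gibbs BC α` and `X = (BC' - BC) / α`. The Gibbs distribution of `BC'` is the
exponential tilt of `p` by `X`, so `KL(p ‖ q) = log 𝔼_p[exp X] - 𝔼_p[X]`. Since `|X| ≤ ε / α`,
Hoeffding's lemma bounds this by `(2ε/α)² / 8 = ε² / (2α²)`.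
-/

open Finset

noncomputable def gibbs {T : Type*} [Fintype T] (f : T → ℝ) (α : ℝ) (τ : T) : ℝ :=
  Real.exp (f τ / α) / ∑ τ' : T, Real.exp (f τ' / α)

open Real MeasureTheory ProbabilityTheory

theorem log_sum_mul_exp_le_of_mem_Icc {ι : Type*} [Fintype ι] {p X : ι → ℝ}
    (hp0 : ∀ i, 0 ≤ p i) (hp1 : ∑ i, p i = 1) {a b : ℝ} (hX : ∀ i, X i ∈ Set.Icc a b) :
    log (∑ i, p i * exp (X i)) ≤ ∑ i, p i * X i + (b - a) ^ 2 / 8 := by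
  let _ : MeasurableSpace ι := ⊤
  have hsum : ∑ i, ENNReal.ofReal (p i) = 1 := by
    rw [← ENNReal.ofReal_sum_of_nonneg fun i _ ↦ hp0 i, hp1, ENNReal.ofReal_one]
  set μ := (PMF.ofFintype _ hsum).toMeasure
  have hμ (f : ι → ℝ) : ∫ i, f i ∂μ = ∑ i, p i * f i := by
    simp [μ, PMF.integral_eq_sum, PMF.ofFintype_apply, ENNReal.toReal_ofReal (hp0 _)]
  have hmgf := (hasSubgaussianMGF_of_mem_Icc (μ := μ) (measurable_of_countable X).aemeasurable
    (ae_of_all _ hX)).mgf_le 1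
  set m := ∑ i, p i * X i
  have hshift : ∑ i, p i * exp (X i - m) = (∑ i, p i * exp (X i)) * exp (-m) := by
    simp only [sub_eq_add_neg, exp_add, Finset.sum_mul, mul_assoc]
  simp only [mgf, hμ, one_mul] at hmgf
  rw [hshift] at hmgf
  have hvar : (((‖b - a‖₊ / 2) ^ 2 : NNReal) : ℝ) * 1 ^ 2 / 2 = (b - a) ^ 2 / 8 := by
    simp only [NNReal.coe_pow, NNReal.coe_div, NNReal.coe_ofNat, coe_nnnorm, norm_eq_abs,
      div_pow, sq_abs]
    ring
  obtain ⟨j, -, hj⟩ : ∃ j ∈ univ, 0 < p j := exists_lt_of_sum_lt (by simp [hp1])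
  have hpos : 0 < ∑ i, p i * exp (X i) :=
    sum_pos' (fun i _ ↦ mul_nonneg (hp0 i) (exp_pos _).le) ⟨j, mem_univ _, by positivity⟩
  rw [hvar, ← le_div_iff₀ (exp_pos _), div_eq_mul_inv, ← exp_neg, neg_neg, ← exp_add] at hmgf
  rwa [log_le_iff_le_exp hpos, add_comm]

section
variable {T : Type*} [Fintype T]

theorem gibbs_pos (f : T → ℝ) (α : ℝ) (τ : T) : 0 < gibbs f α τ :=
  div_pos (exp_pos _) (sum_pos (fun _ _ ↦ exp_pos _) ⟨τ, mem_univ τ⟩)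

theorem sum_gibbs [Nonempty T] (f : T → ℝ) (α : ℝ) : ∑ τ, gibbs f α τ = 1 := by
  simp only [gibbs, ← sum_div]
  exact div_self (sum_pos (fun _ _ ↦ exp_pos _) univ_nonempty).ne'

theorem gibbs_mul_exp_sub_div (f g : T → ℝ) (α : ℝ) (τ : T) :
    gibbs f α τ * exp ((g τ - f τ) / α) = exp (g τ / α) / ∑ σ, exp (f σ / α) := by
  rw [gibbs, div_mul_eq_mul_div, ← exp_add, sub_div, add_sub_cancel]

theorem gibbs_eq_gibbs_mul_exp_div (f g : T → ℝ) (α : ℝ) (τ : T) :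
    gibbs g α τ = gibbs f α τ * exp ((g τ - f τ) / α) /
      ∑ σ, gibbs f α σ * exp ((g σ - f σ) / α) := by
  have hZ : ∑ σ, exp (f σ / α) ≠ 0 := (sum_pos (fun _ _ ↦ exp_pos _) ⟨τ, mem_univ τ⟩).ne'
  simp only [gibbs_mul_exp_sub_div, ← sum_div]
  rw [div_div_div_cancel_right₀ hZ, gibbs]

theorem sum_gibbs_mul_log_div_gibbs [Nonempty T] (f g : T → ℝ) (α : ℝ) :
    ∑ τ, gibbs f α τ * log (gibbs f α τ / gibbs g α τ) =
      log (∑ τ, gibbs f α τ * exp ((g τ - f τ) / α)) -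
        ∑ τ, gibbs f α τ * ((g τ - f τ) / α) := by
  set S := ∑ τ, gibbs f α τ * exp ((g τ - f τ) / α)
  have hS : 0 < S := sum_pos (fun τ _ ↦ mul_pos (gibbs_pos f α τ) (exp_pos _)) univ_nonempty
  have hlog (τ : T) : log (gibbs f α τ / gibbs g α τ) = log S - (g τ - f τ) / α := by
    rw [gibbs_eq_gibbs_mul_exp_div f g α τ, div_div_eq_mul_div, mul_div_mul_left _ _
      (gibbs_pos f α τ).ne', log_div hS.ne' (exp_pos _).ne', log_exp]
  simp only [hlog, mul_sub, sum_sub_distrib, ← sum_mul, sum_gibbs, one_mul]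

end

theorem stmt_18 {T : Type*} [Fintype T] [Nonempty T]
    (BC BC' : T → ℝ) (ε α : ℝ) (hα : 0 < α)
    (hbound : ∀ τ, |BC' τ - BC τ| ≤ ε) :
    ∑ τ : T, gibbs BC α τ * Real.log (gibbs BC α τ / gibbs BC' α τ) ≤
      ε ^ 2 / (2 * α ^ 2) := by
  have hX (τ : T) : (BC' τ - BC τ) / α ∈ Set.Icc (-(ε / α)) (ε / α) := by
    rw [Set.mem_Icc, ← abs_le, abs_div, abs_of_pos hα]
    exact div_le_div_of_nonneg_right (hbound τ) hα.le
  rw [sum_gibbs_mul_log_div_gibbs]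
  calc _ ≤ (ε / α - -(ε / α)) ^ 2 / 8 :=
        sub_le_iff_le_add'.mpr <| log_sum_mul_exp_le_of_mem_Icc
          (fun τ ↦ (gibbs_pos BC α τ).le) (sum_gibbs BC α) hX
    _ = ε ^ 2 / (2 * α ^ 2) := by field_simp; ring
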